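/- Suppose {H₁,…,Hₙ} is an ℝ-basis of H and {D₁,…,Dₙ} is an ℝ-basis of D. Let F₁ = {Σⱼ tⱼHⱼ + Σⱼ uⱼDⱼ : tⱼ, uⱼ ∈ [−1/2, 1/2]} be the parallelotope centered at the origin whose sides are spanned by H₁,…,Hₙ,D₁,…,Dₙ. Then F₁ is a fundamental domain for both L₁ and L₂: for L = L₁ and for L = L₂, every point p ∈ ℂⁿ satisfies p + V ∈ F₁ for some V ∈ L, and for distinct V, V′ ∈ L the interiors of F₁ + V and F₁ + V′ are disjoint. -/

import Mathlib

/-!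
Let `B = (H₁,…,Hₙ,D₁,…,Dₙ)`, a real basis of `ℂⁿ = H ⊕ D`; then `F₁` is the cube of points whose
`B`-coordinates lie in `[-1/2, 1/2]`. Both lattices are generated by a family that is
block-triangular with respect to `B` (for `L₂`, after swapping the two halves of `B`): the first
block is the first half of `B`, and each remaining generator is minus the matching vector of the
second half modulo the span of the first half, since `R_H(d) = 2 Re d - d` with `2 Re d ∈ H`
and `R_D(h) = (1 + i) h - h` with `(1 + i) h ∈ D`. For such a family a point is moved into the
cube by rounding first its second-half coordinates, then its first-half ones; and a lattice
vector with all coordinates in `(-1, 1)` has integer coefficients that vanish, block by block.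
-/

open Complex Set Submodule Module

def AddSubgroup.IsFundamentalDomain {E : Type*} [AddCommGroup E] [TopologicalSpace E]
    (L : AddSubgroup E) (F : Set E) : Prop :=
  (∀ p, ∃ V ∈ L, p + V ∈ F) ∧
    ∀ V ∈ L, ∀ V' ∈ L, V ≠ V' →
      Disjoint (interior ((V + ·) '' F)) (interior ((V' + ·) '' F))

namespace Module.Basis

noncomputable def sumOfIsCompl {R M ι κ : Type*} [Ring R] [AddCommGroup M] [Module R M]
    {v : ι → M} {w : κ → M} (hv : LinearIndependent R v) (hw : LinearIndependent R w)
    (h : IsCompl (span R (range v)) (span R (range w))) : Basis (ι ⊕ κ) R M :=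
  .mk (hv.sum_type hw h.disjoint) (by rw [Set.Sum.elim_range, span_union, h.sup_eq_top])

@[simp]
theorem coe_sumOfIsCompl {R M ι κ : Type*} [Ring R] [AddCommGroup M] [Module R M]
    {v : ι → M} {w : κ → M} (hv : LinearIndependent R v) (hw : LinearIndependent R w)
    (h : IsCompl (span R (range v)) (span R (range w))) : ⇑(sumOfIsCompl hv hw h) = Sum.elim v w :=
  coe_mk _ _

variable {ι κ E : Type*} [AddCommGroup E] [Module ℝ E]

def centeredParallelepiped (B : Basis ι ℝ E) : Set E :=
  {z | ∀ k, B.repr z k ∈ Icc (-(1/2) : ℝ) (1/2)}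

theorem centeredParallelepiped_reindex (B : Basis ι ℝ E) (e : ι ≃ κ) :
    (B.reindex e).centeredParallelepiped = B.centeredParallelepiped := by
  ext z
  simp only [centeredParallelepiped, mem_ofPred_eq, repr_reindex_apply]
  exact (e.forall_congr_left (p := fun k => B.repr z k ∈ Icc _ _)).symm

theorem centeredParallelepiped_eq_sum_elim [Fintype ι] [Fintype κ] (B : Basis (ι ⊕ κ) ℝ E) :
    B.centeredParallelepiped = {p | ∃ t u : _ → ℝ,
      (∀ j, t j ∈ Icc (-(1/2) : ℝ) (1/2)) ∧ (∀ j, u j ∈ Icc (-(1/2) : ℝ) (1/2)) ∧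
      p = ∑ j, t j • B (.inl j) + ∑ j, u j • B (.inr j)} := by
  ext p
  have hsum (t : ι → ℝ) (u : κ → ℝ) :
      ∑ j, t j • B (.inl j) + ∑ j, u j • B (.inr j) = ∑ k, Sum.elim t u k • B k :=
    (Fintype.sum_sum_type fun k => Sum.elim t u k • B k).symm
  constructor
  · intro hp
    refine ⟨fun j => B.repr p (.inl j), fun j => B.repr p (.inr j), fun j => hp _, fun j => hp _, ?_⟩
    rw [hsum, ← B.sum_repr p]
    congr! 2 with (k | k) <;> simp
  · rintro ⟨t, u, ht, hu, rfl⟩ (k | k)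
    all_goals rw [hsum, B.repr_sum_self]
    exacts [ht k, hu k]

section Topology

variable [TopologicalSpace E] [IsTopologicalAddGroup E] [ContinuousSMul ℝ E] [T2Space E]

theorem interior_centeredParallelepiped [Finite ι] (B : Basis ι ℝ E) :
    interior B.centeredParallelepiped = {z | ∀ k, B.repr z k ∈ Ioo (-(1/2) : ℝ) (1/2)} := by
  have h : B.centeredParallelepiped = B.equivFunL ⁻¹' univ.pi fun _ => Icc (-(1/2)) (1/2) := by
    ext z
    simp only [centeredParallelepiped, mem_preimage, mem_univ_pi, equivFunL_apply, mem_ofPred_eq]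
  rw [h, ← ContinuousLinearEquiv.coe_toHomeomorph, ← Homeomorph.preimage_interior,
    interior_pi_set finite_univ]
  ext z
  simp only [interior_Icc, mem_preimage, mem_univ_pi, ContinuousLinearEquiv.coe_toHomeomorph,
    equivFunL_apply, mem_ofPred_eq]

theorem disjoint_interior_vadd_centeredParallelepiped [Finite ι] (B : Basis ι ℝ E)
    {L : AddSubgroup E} (hL : ∀ V ∈ L, (∀ k, |B.repr V k| < 1) → V = 0)
    {V V' : E} (hV : V ∈ L) (hV' : V' ∈ L) (hne : V ≠ V') :
    Disjoint (interior ((V + ·) '' B.centeredParallelepiped))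
      (interior ((V' + ·) '' B.centeredParallelepiped)) := by
  rw [← Homeomorph.coe_addLeft, ← Homeomorph.coe_addLeft, ← Homeomorph.image_interior,
    ← Homeomorph.image_interior, interior_centeredParallelepiped, disjoint_left]
  rintro _ ⟨y, hy, rfl⟩ ⟨y', hy', hyy'⟩
  refine hne (sub_eq_zero.mp (hL _ (sub_mem hV hV') fun k => ?_))
  have hdiff : V - V' = y' - y := by
    rw [sub_eq_sub_iff_add_eq_add, add_comm y']
    exact hyy'.symm
  rw [hdiff, map_sub, Finsupp.sub_apply, abs_lt]
  constructor <;> linarith [(hy k).1, (hy k).2, (hy' k).1, (hy' k).2]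

end Topology

theorem repr_inr_eq_zero_of_mem_span_inl (B : Basis (ι ⊕ κ) ℝ E) {v : E}
    (hv : v ∈ span ℝ (range (B ∘ Sum.inl))) (j : κ) : B.repr v (.inr j) = 0 := by
  rw [range_comp, mem_span_image] at hv
  exact Finsupp.notMem_support_iff.mp fun hj => by simpa using hv hj

section TriangularGenerators

variable [Fintype ι] [Fintype κ] (B : Basis (ι ⊕ κ) ℝ E) {g : ι ⊕ κ → E}

omit [Fintype κ] in
theorem repr_sum_zsmul_inl (hl : ∀ i, g (.inl i) = B (.inl i)) (a : ι → ℤ) (k : ι ⊕ κ) :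
    B.repr (∑ i, a i • g (.inl i)) k = Sum.elim (fun i => (a i : ℝ)) 0 k := by
  classical
  rcases k with j | j <;>
    simp [hl, map_sum, ← Int.cast_smul_eq_zsmul ℝ, Finsupp.single_apply]

omit [Fintype ι] in
theorem repr_add_sum_zsmul_inr (hr : ∀ i, g (.inr i) + B (.inr i) ∈ span ℝ (range (B ∘ .inl)))
    (x : E) (b : κ → ℤ) (j : κ) :
    B.repr (x + ∑ i, b i • g (.inr i)) (.inr j) = B.repr x (.inr j) - b j := by
  classical
  have hsplit : ∑ i, b i • g (.inr i)
      = ∑ i, b i • (g (.inr i) + B (.inr i)) - ∑ i, (b i : ℝ) • B (.inr i) := by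
    simp [smul_add, Finset.sum_add_distrib, Int.cast_smul_eq_zsmul]
  have hspan : ∑ i, b i • (g (.inr i) + B (.inr i)) ∈ span ℝ (range (B ∘ .inl)) :=
    Submodule.sum_mem _ fun i _ => Submodule.smul_of_tower_mem _ _ (hr i)
  rw [hsplit, map_add, map_sub, Finsupp.add_apply, Finsupp.sub_apply,
    repr_inr_eq_zero_of_mem_span_inl B hspan]
  simp [map_sum, Finsupp.single_apply, sub_eq_add_neg]

-- `g` is block upper-triangular in the basis `B`, with diagonal blocks `1` and `-1`.
variable (hl : ∀ i, g (.inl i) = B (.inl i))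
  (hr : ∀ i, g (.inr i) + B (.inr i) ∈ span ℝ (range (B ∘ .inl)))
include hl hr

theorem eq_zero_of_mem_closure_of_abs_repr_lt_one {V : E} (hV : V ∈ AddSubgroup.closure (range g))
    (hsmall : ∀ k, |B.repr V k| < 1) : V = 0 := by
  obtain ⟨c, rfl⟩ := AddSubgroup.mem_closure_range_iff_of_fintype.mp hV
  have int_eq_zero (m : ℤ) (hm : |(m : ℝ)| < 1) : m = 0 :=
    Int.abs_lt_one_iff.mp (by exact_mod_cast hm)
  rw [Fintype.sum_sum_type] at hsmall ⊢
  have hc_inr (j : κ) : c (.inr j) = 0 := by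
    have h := hsmall (.inr j)
    rw [repr_add_sum_zsmul_inr B hr, repr_sum_zsmul_inl B hl, Sum.elim_inr, Pi.zero_apply,
      zero_sub, abs_neg] at h
    exact int_eq_zero _ h
  have hc_inl (j : ι) : c (.inl j) = 0 := by
    have h := hsmall (.inl j)
    simp only [hc_inr, zero_smul, Finset.sum_const_zero, add_zero, repr_sum_zsmul_inl B hl,
      Sum.elim_inl] at h
    exact int_eq_zero _ h
  simp [hc_inl, hc_inr]

theorem exists_add_mem_centeredParallelepiped (p : E) :
    ∃ V ∈ AddSubgroup.closure (range g), p + V ∈ B.centeredParallelepiped := by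
  have hmem (m : ℤ) (k : ι ⊕ κ) : m • g k ∈ AddSubgroup.closure (range g) :=
    zsmul_mem (AddSubgroup.subset_closure (mem_range_self k)) m
  set b : κ → ℤ := fun j => round (B.repr p (.inr j))
  set q := p + ∑ j, b j • g (.inr j)
  set a : ι → ℤ := fun j => -round (B.repr q (.inl j))
  refine ⟨∑ j, b j • g (.inr j) + ∑ j, a j • g (.inl j),
    add_mem (sum_mem fun j _ => hmem _ _) (sum_mem fun j _ => hmem _ _), ?_⟩
  have hround (x : ℝ) : x - round x ∈ Icc (-(1/2) : ℝ) (1/2) := abs_le.mp (abs_sub_round x)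
  rw [← add_assoc]
  rintro (j | j) <;> rw [map_add, Finsupp.add_apply, repr_sum_zsmul_inl B hl]
  · rw [Sum.elim_inl, Int.cast_neg, ← sub_eq_add_neg]
    exact hround _
  · rw [Sum.elim_inr, Pi.zero_apply, add_zero, repr_add_sum_zsmul_inr B hr]
    exact hround _

theorem isFundamentalDomain_centeredParallelepiped [TopologicalSpace E] [IsTopologicalAddGroup E]
    [ContinuousSMul ℝ E] [T2Space E] :
    (AddSubgroup.closure (range g)).IsFundamentalDomain B.centeredParallelepiped :=
  ⟨B.exists_add_mem_centeredParallelepiped hl hr, fun _ hV _ hV' hne =>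
    B.disjoint_interior_vadd_centeredParallelepiped
      (fun _ hW => B.eq_zero_of_mem_closure_of_abs_repr_lt_one hl hr hW) hV hV' hne⟩

end TriangularGenerators

end Module.Basis

section ComplexSubspaces

variable (n : ℕ)

def imZeroSubspace : Submodule ℝ (Fin n → ℂ) where
  carrier := {z | ∀ j, (z j).im = 0}
  add_mem' hz hw j := by simp [hz j, hw j]
  zero_mem' j := rfl
  smul_mem' c z hz j := by simp [hz j]

def imEqReSubspace : Submodule ℝ (Fin n → ℂ) where
  carrier := {z | ∀ j, (z j).im = (z j).re}
  add_mem' hz hw j := by simp [hz j, hw j]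
  zero_mem' j := rfl
  smul_mem' c z hz j := by simp [hz j]

theorem isCompl_imZeroSubspace_imEqReSubspace :
    IsCompl (imZeroSubspace n) (imEqReSubspace n) := by
  refine ⟨disjoint_iff_inf_le.mpr fun z ⟨hH, hD⟩ => funext fun j => ?_,
    codisjoint_iff_le_sup.mpr fun z _ => mem_sup.mpr ?_⟩
  · exact Complex.ext (by simp [← hD j, hH j]) (hH j)
  · refine ⟨fun j => ((z j).re - (z j).im : ℝ), fun j => by simp,
      fun j => (z j).im * (1 + I), fun j => by simp, funext fun j => ?_⟩
    apply Complex.ext <;> simp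

variable {n}

theorem conj_add_self_mem_imZeroSubspace (z : Fin n → ℂ) :
    (fun j => starRingEnd ℂ (z j)) + z ∈ imZeroSubspace n := fun j => by simp

theorem I_mul_conj_add_self_mem_imEqReSubspace {z : Fin n → ℂ} (hz : z ∈ imZeroSubspace n) :
    (fun j => I * starRingEnd ℂ (z j)) + z ∈ imEqReSubspace n := fun j => by simp [hz j]

end ComplexSubspaces

theorem F1_fundamental_domain (n : ℕ) (Hv Dv : Fin n → (Fin n → ℂ))
    (hHind : LinearIndependent ℝ Hv)
    (hHspan : (Submodule.span ℝ (Set.range Hv) : Set (Fin n → ℂ))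
      = {z : Fin n → ℂ | ∀ j, (z j).im = 0})
    (hDind : LinearIndependent ℝ Dv)
    (hDspan : (Submodule.span ℝ (Set.range Dv) : Set (Fin n → ℂ))
      = {z : Fin n → ℂ | ∀ j, (z j).im = (z j).re})
    (F₁ : Set (Fin n → ℂ))
    (hF₁ : F₁ = {p : Fin n → ℂ | ∃ t u : Fin n → ℝ,
      (∀ j, t j ∈ Set.Icc (-(1/2) : ℝ) (1/2)) ∧ (∀ j, u j ∈ Set.Icc (-(1/2) : ℝ) (1/2)) ∧
      p = ∑ j, t j • Hv j + ∑ j, u j • Dv j})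
    (L₁ L₂ : AddSubgroup (Fin n → ℂ))
    (hL₁ : L₁ = AddSubgroup.closure
      (Set.range Hv ∪ Set.range fun i => fun j => (starRingEnd ℂ) (Dv i j)))
    (hL₂ : L₂ = AddSubgroup.closure
      (Set.range Dv ∪ Set.range fun i => fun j => Complex.I * (starRingEnd ℂ) (Hv i j))) :
    ∀ L : AddSubgroup (Fin n → ℂ), (L = L₁ ∨ L = L₂) →
      (∀ p : Fin n → ℂ, ∃ V ∈ L, p + V ∈ F₁) ∧
      (∀ V ∈ L, ∀ V' ∈ L, V ≠ V' →
        Disjoint (interior ((fun p => V + p) '' F₁)) (interior ((fun p => V' + p) '' F₁))) := by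
  have hH : span ℝ (range Hv) = imZeroSubspace n := SetLike.coe_injective hHspan
  have hD : span ℝ (range Dv) = imEqReSubspace n := SetLike.coe_injective hDspan
  let B := Basis.sumOfIsCompl hHind hDind (hH ▸ hD ▸ isCompl_imZeroSubspace_imEqReSubspace n)
  let B' := B.reindex (Equiv.sumComm _ _)
  have hF : F₁ = B.centeredParallelepiped := by
    simp [hF₁, Basis.centeredParallelepiped_eq_sum_elim, B]
  rintro L (rfl | rfl)
  · rw [hL₁, ← Set.Sum.elim_range, hF]
    refine B.isFundamentalDomain_centeredParallelepiped (fun i => by simp [B]) fun i => ?_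
    simpa [B, hH] using conj_add_self_mem_imZeroSubspace (Dv i)
  · rw [hL₂, ← Set.Sum.elim_range, hF, ← B.centeredParallelepiped_reindex (Equiv.sumComm _ _)]
    refine B'.isFundamentalDomain_centeredParallelepiped (fun i => by simp [B', B]) fun i => ?_
    have hHv : Hv i ∈ imZeroSubspace n := hH ▸ subset_span (mem_range_self i)
    simpa [B', B, hD] using I_mul_conj_add_self_mem_imEqReSubspace hHv
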